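/- arXiv:1807.05652 — 2 statements merged into one kernel-verified Lean document; each statement's English description precedes it below -/
import Mathlib

section
/- In the balls-into-bins model with an independently, uniformly chosen attack bin, let X be the number of balls in the attack bin and let Y be the maximum number of balls contained in any single bin. Then for every real α and every real y_max, Pr(Y − X < α) ≥ Σ_{k integer, y_max − α < k ≤ n} C(n,k) · (1/m)^k · (1 − 1/m)^(n−k) − Pr(Y > y_max). -/
/-!
If `Y ≤ ymax` and `X > ymax - α`, then `Y - X < α`; a union bound therefore gives
`Pr(Y - X < α) ≥ Pr(X > ymax - α) - Pr(Y > ymax)`. Whatever the attack bin, each ball lands in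
it independently with probability `1/m`, so `X` is binomial with parameters `n` and `1/m`; this
is checked by counting the placements that put exactly a given set of balls into a given bin.
-/

open MeasureTheory Finset

section Counting

variable {ι α : Type*} [Fintype ι] [DecidableEq ι] [Fintype α] [DecidableEq α]

lemma card_funs_fiber_eq (u : α) (s : Finset ι) :
    #{f : ι → α | ({i | f i = u} : Finset ι) = s}
      = (Fintype.card α - 1) ^ (Fintype.card ι - #s) := by
  have hcard (i : ι) : Fintype.card {x : α // x = u ↔ i ∈ s}
      = if i ∈ s then 1 else Fintype.card α - 1 := by
    split_ifs with hi
    · simp [hi]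
    · simp only [hi, iff_false]
      rw [Fintype.card_subtype_compl, Fintype.card_subtype_eq]
  have hfib (f : ι → α) : ({i | f i = u} : Finset ι) = s ↔ ∀ i, f i = u ↔ i ∈ s := by
    simp [Finset.ext_iff]
  simp_rw [hfib]
  rw [← Fintype.card_subtype,
    Fintype.card_congr (Equiv.subtypePiEquivPi (p := fun i x => x = u ↔ i ∈ s)),
    Fintype.card_pi]
  simp_rw [hcard]
  rw [prod_ite, prod_const_one, one_mul, prod_const, filter_notMem_eq_sdiff, card_univ_sdiff]

lemma card_funs_card_fiber_eq (u : α) (k : ℕ) :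
    #{f : ι → α | #{i | f i = u} = k}
      = (Fintype.card ι).choose k * (Fintype.card α - 1) ^ (Fintype.card ι - k) := by
  have hmem (f : ι → α) :
      ({i | f i = u} : Finset ι) ∈ powersetCard k univ ↔ #{i | f i = u} = k := by
    simp [mem_powersetCard]
  simp_rw [← hmem, ← sum_card_fiberwise_eq_card_filter]
  rw [sum_congr rfl fun s hs => by rw [card_funs_fiber_eq, (mem_powersetCard.1 hs).2],
    sum_const, card_powersetCard, card_univ, smul_eq_mul]

lemma card_pairs_card_fiber_eq (k : ℕ) :
    #{ω : (ι → α) × α | #{i | ω.1 i = ω.2} = k}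
      = Fintype.card α
          * ((Fintype.card ι).choose k * (Fintype.card α - 1) ^ (Fintype.card ι - k)) := by
  rw [card_filter, Fintype.sum_prod_type_right]
  simp_rw [← card_filter, card_funs_card_fiber_eq, sum_const, card_univ, smul_eq_mul]

end Counting

lemma measureReal_uniformOfFintype_setOf {Ω : Type*} [Fintype Ω] [Nonempty Ω]
    [MeasurableSpace Ω] [MeasurableSingletonClass Ω] (p : Ω → Prop) [DecidablePred p] :
    (PMF.uniformOfFintype Ω).toMeasure.real {ω | p ω} = #{ω | p ω} / Fintype.card Ω := by
  rw [measureReal_def, PMF.toMeasure_uniformOfFintype_apply _ (Set.toFinite _).measurableSet,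
    ENNReal.toReal_div, Fintype.card_subtype]
  simp

lemma uniformOfFintype_measureReal_card_fiber_eq {ι α : Type*} [Fintype ι] [DecidableEq ι]
    [Fintype α] [DecidableEq α] [Nonempty α] [MeasurableSpace α] [MeasurableSingletonClass α]
    {k : ℕ} (hk : k ≤ Fintype.card ι) :
    (PMF.uniformOfFintype ((ι → α) × α)).toMeasure.real {ω | #{i | ω.1 i = ω.2} = k}
      = (Fintype.card ι).choose k * (1 / (Fintype.card α : ℝ)) ^ k
          * (1 - 1 / (Fintype.card α : ℝ)) ^ (Fintype.card ι - k) := by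
  rw [measureReal_uniformOfFintype_setOf, card_pairs_card_fiber_eq, Fintype.card_prod,
    Fintype.card_fun]
  have hm : (Fintype.card α : ℝ) ≠ 0 := Nat.cast_ne_zero.2 Fintype.card_ne_zero
  have hsplit : (Fintype.card α : ℝ) ^ Fintype.card ι
      = (Fintype.card α : ℝ) ^ k * (Fintype.card α : ℝ) ^ (Fintype.card ι - k) := by
    rw [← pow_add, Nat.add_sub_cancel' hk]
  push_cast [Nat.cast_sub Fintype.card_pos]
  rw [hsplit, one_sub_div hm, div_pow, div_pow, one_pow]
  field_simp

lemma measureReal_sub_lt_ge {Ω : Type*} [MeasurableSpace Ω] (μ : Measure Ω) [IsFiniteMeasure μ]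
    (X Y : Ω → ℝ) (a b : ℝ) :
    μ.real {ω | b - a < X ω} - μ.real {ω | b < Y ω} ≤ μ.real {ω | Y ω - X ω < a} := by
  have hcover : {ω | b - a < X ω} ⊆ {ω | Y ω - X ω < a} ∪ {ω | b < Y ω} := by
    intro ω (hX : b - a < X ω)
    by_cases hY : b < Y ω
    · exact Or.inr hY
    · exact Or.inl (show Y ω - X ω < a by linarith [not_lt.1 hY])
  linarith [measureReal_mono (μ := μ) hcover,
    measureReal_union_le (μ := μ) {ω | Y ω - X ω < a} {ω | b < Y ω}]

/-- Balls-into-bins with an independently, uniformly chosen attack bin: with `X` the number of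
balls in the attack bin and `Y` the maximum number of balls in any single bin, for every real
`α` and `y_max`,
`Pr(Y − X < α) ≥ Σ_{k ∈ ℕ, y_max − α < k ≤ n} C(n,k)·(1/m)^k·(1 − 1/m)^(n−k) − Pr(Y > y_max)`.
Here the sample point `ω` consists of the placement `ω.1` of the `n` balls into the `m` bins
together with the attack bin `ω.2`. -/
theorem detection_prob_lower_bound (m n : ℕ) [NeZero m] (α ymax : ℝ) :
    ((PMF.uniformOfFintype ((Fin n → Fin m) × Fin m)).toMeasure
        {ω | ((Finset.univ.sup (fun b : Fin m =>
                (Finset.univ.filter (fun i : Fin n => ω.1 i = b)).card) : ℕ) : ℝ)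
              - ((Finset.univ.filter (fun i : Fin n => ω.1 i = ω.2)).card : ℝ) < α}).toReal
    ≥ (∑ k ∈ (Finset.range (n + 1)).filter (fun k : ℕ => ymax - α < (k : ℝ)),
          (n.choose k : ℝ) * (1 / (m : ℝ)) ^ k * (1 - 1 / (m : ℝ)) ^ (n - k))
      - ((PMF.uniformOfFintype ((Fin n → Fin m) × Fin m)).toMeasure
          {ω | ymax < ((Finset.univ.sup (fun b : Fin m =>
                (Finset.univ.filter (fun i : Fin n => ω.1 i = b)).card) : ℕ) : ℝ)}).toReal := by
  set μ := (PMF.uniformOfFintype ((Fin n → Fin m) × Fin m)).toMeasure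
  set X : (Fin n → Fin m) × Fin m → ℕ := fun ω => #{i | ω.1 i = ω.2}
  have hX : {ω | ymax - α < (X ω : ℝ)}
      = X ⁻¹' ↑({k ∈ range (n + 1) | ymax - α < (k : ℝ)} : Finset ℕ) := by
    ext ω
    have hXn : X ω ≤ n := (card_filter_le _ _).trans (card_fin n).le
    simpa using fun _ => hXn
  have hbinom : μ.real {ω | ymax - α < (X ω : ℝ)}
      = ∑ k ∈ (range (n + 1)).filter (fun k : ℕ => ymax - α < (k : ℝ)),
          (n.choose k : ℝ) * (1 / (m : ℝ)) ^ k * (1 - 1 / (m : ℝ)) ^ (n - k) := by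
    rw [hX, ← sum_measureReal_preimage_singleton (μ := μ) _
      fun _ _ => (Set.toFinite _).measurableSet]
    refine sum_congr rfl fun k hk => ?_
    have hkn : k ≤ Fintype.card (Fin n) := by
      simpa [Nat.lt_succ_iff] using (mem_filter.1 hk).1
    have h := uniformOfFintype_measureReal_card_fiber_eq (α := Fin m) hkn
    rw [Fintype.card_fin, Fintype.card_fin] at h
    exact h
  simp only [← measureReal_def, ge_iff_le, ← hbinom]
  exact measureReal_sub_lt_ge μ (fun ω => X ω) _ α ymax
end

section
/- Consider n weighted balls thrown independently and uniformly at random into m bins. For a nonnegative weight vector w = (w_1, …, w_n), let S_i(w) denote the total load of the i bins with the highest loads (the load of a bin is the sum of the weights of the balls landing in it). Let w = (w_1, …, w_n) and w' = (w'_1, …, w'_n) be nonincreasing nonnegative weight vectors with Σ_{i=1}^n w_i = Σ_{i=1}^n w'_i and Σ_{i=1}^k w_i ≥ Σ_{i=1}^k w'_i for all 1 ≤ k ≤ n. Then E(S_i(w)) ≥ E(S_i(w')) for all 1 ≤ i ≤ m. -/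
/-!
For each placement, the top-`i` load is a maximum of linear functions of the weight vector, hence
convex in it, and convexity survives taking the expectation. The expectation is also invariant
under permuting the balls, because composing a uniform placement with a permutation leaves it
uniform. A convex, permutation-invariant `F` cannot increase under a Robin Hood transfer of
`0 ≤ δ ≤ w p - w q` from ball `p` to ball `q`: the result is a convex combination of `w` and of `w`
with `p` and `q` swapped. Finally, as in the Hardy–Littlewood–Pólya theorem, when `w` majorizes
the sorted `w'` finitely many such transfers turn `w` into `w'`, and each one makes one more
coordinate agree with `w'`.
-/

open MeasureTheory

/-- The load of bin `b` when `n` balls with weights `w` are placed according to `ω`. -/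
def binLoad {m n : ℕ} (w : Fin n → ℝ) (ω : Fin n → Fin m) (b : Fin m) : ℝ :=
  ∑ j ∈ Finset.univ.filter (fun j : Fin n => ω j = b), w j

/-- `S_i(w)`: the total load of the `i` bins with the highest loads, realized as the maximum,
over all sets `T` of `i` bins, of the total load of `T`. -/
noncomputable def topLoad (m n i : ℕ) (w : Fin n → ℝ) (ω : Fin n → Fin m) : ℝ :=
  ⨆ T : {T : Finset (Fin m) // T.card = i}, ∑ b ∈ T.1, binLoad w ω b

open Finset

def transfer {ι : Type*} [DecidableEq ι] (w : ι → ℝ) (p q : ι) (δ : ℝ) : ι → ℝ :=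
  w + Pi.single q δ - Pi.single p δ

theorem ConvexOn.apply_transfer_le {ι : Type*} [DecidableEq ι] {F : (ι → ℝ) → ℝ}
    (hF : ConvexOn ℝ Set.univ F) (hswap : ∀ w p q, F (w ∘ Equiv.swap p q) = F w)
    {w : ι → ℝ} {p q : ι} {δ : ℝ} (hδ : 0 ≤ δ) (hδw : δ ≤ w p - w q) :
    F (transfer w p q δ) ≤ F w := by
  rcases hδ.eq_or_lt with rfl | hδ
  · simp [transfer]
  have hgap : 0 < w p - w q := hδ.trans_le hδw
  have hpq : p ≠ q := by rintro rfl; simp at hgap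
  set t := δ / (w p - w q)
  have htδ : t * (w p - w q) = δ := div_mul_cancel₀ δ hgap.ne'
  have hmix : transfer w p q δ = (1 - t) • w + t • (w ∘ Equiv.swap p q) := by
    funext j
    rcases eq_or_ne j p with rfl | hjp
    · simp only [transfer, Pi.sub_apply, Pi.add_apply, Pi.smul_apply, Function.comp_apply,
        Pi.single_eq_same, Pi.single_eq_of_ne hpq, Equiv.swap_apply_left, smul_eq_mul]
      linear_combination htδ
    rcases eq_or_ne j q with rfl | hjq
    · simp only [transfer, Pi.sub_apply, Pi.add_apply, Pi.smul_apply, Function.comp_apply,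
        Pi.single_eq_same, Pi.single_eq_of_ne hjp, Equiv.swap_apply_right, smul_eq_mul]
      linear_combination -htδ
    · simp only [transfer, Pi.sub_apply, Pi.add_apply, Pi.smul_apply, Function.comp_apply,
        Pi.single_eq_of_ne hjp, Pi.single_eq_of_ne hjq, Equiv.swap_apply_of_ne_of_ne hjp hjq,
        smul_eq_mul]
      ring
  have ht0 : 0 ≤ t := (div_pos hδ hgap).le
  have ht1 : t ≤ 1 := div_le_one_of_le₀ hδw hgap.le
  calc F (transfer w p q δ) = F ((1 - t) • w + t • (w ∘ Equiv.swap p q)) := by rw [hmix]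
    _ ≤ (1 - t) • F w + t • F (w ∘ Equiv.swap p q) :=
        hF.2 trivial trivial (sub_nonneg.2 ht1) ht0 (sub_add_cancel 1 t)
    _ = F w := by rw [hswap, ← add_smul, sub_add_cancel, one_smul]

section Majorization

variable {n : ℕ}

def prefixSum (w : Fin n → ℝ) (k : ℕ) : ℝ :=
  ∑ j ∈ univ.filter (fun j : Fin n => (j : ℕ) < k), w j

/-- Prefix sums are taken in index order, without sorting `w`; for an antitone `w'` this implies
the usual majorization of `w'` by `w`. -/
structure Majorizes (w w' : Fin n → ℝ) : Prop where
  sum_eq : ∑ j, w j = ∑ j, w' j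
  prefixSum_le : ∀ k ≤ n, prefixSum w' k ≤ prefixSum w k

theorem prefixSum_succ (w : Fin n → ℝ) (p : Fin n) :
    prefixSum w (p + 1) = prefixSum w p + w p := by
  have : univ.filter (fun j : Fin n => (j : ℕ) < p + 1)
      = insert p (univ.filter fun j : Fin n => (j : ℕ) < p) := by
    ext j
    simp only [mem_filter, mem_insert, mem_univ, true_and, Fin.ext_iff]
    omega
  rw [prefixSum, this, sum_insert (by simp), add_comm]
  rfl

theorem prefixSum_transfer (w : Fin n → ℝ) (p q : Fin n) (δ : ℝ) (k : ℕ) :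
    prefixSum (transfer w p q δ) k
      = prefixSum w k + (if (q : ℕ) < k then δ else 0) - (if (p : ℕ) < k then δ else 0) := by
  simp only [prefixSum, transfer, Pi.add_apply, Pi.sub_apply, sum_add_distrib, sum_sub_distrib,
    sum_pi_single', mem_filter, mem_univ, true_and]

theorem sub_le_prefixSum_sub_prefixSum {w w' : Fin n → ℝ} {k : ℕ}
    (hle : ∀ j : Fin n, (j : ℕ) < k → w' j ≤ w j) {p : Fin n} (hpk : (p : ℕ) < k) :
    w p - w' p ≤ prefixSum w k - prefixSum w' k := by
  rw [prefixSum, prefixSum, ← sum_sub_distrib]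
  refine single_le_sum (f := fun j => w j - w' j) (fun j hj => ?_) (by simpa using hpk)
  simpa using hle j (by simpa using hj)

theorem Majorizes.exists_first_gain {w w' : Fin n → ℝ} (h : Majorizes w w') (hne : w ≠ w') :
    ∃ p, w' p < w p ∧ ∀ j < p, w j = w' j := by
  obtain ⟨p, hp, hmin⟩ := (univ.filter fun j => w j ≠ w' j).exists_min_image id
    (by simpa [Finset.Nonempty, funext_iff] using hne)
  simp only [mem_filter, mem_univ, true_and, id] at hp hmin
  have hbefore : ∀ j < p, w j = w' j := fun j hj => by
    by_contra hne
    exact (hmin j hne).not_gt hj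
  have hagree : prefixSum w p = prefixSum w' p :=
    sum_congr rfl fun j hj => hbefore j (by simpa using hj)
  have hstep := h.prefixSum_le (p + 1) p.isLt
  rw [prefixSum_succ, prefixSum_succ, hagree] at hstep
  exact ⟨p, lt_of_le_of_ne (by linarith) (Ne.symm hp), hbefore⟩

theorem exists_first_loss_after {w w' : Fin n → ℝ} (hsum : ∑ j, w j ≤ ∑ j, w' j) {p : Fin n}
    (hp : w' p < w p) (hbefore : ∀ j < p, w' j ≤ w j) :
    ∃ q, p < q ∧ w q < w' q ∧ ∀ j, p < j → j < q → w' j ≤ w j := by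
  have hloss : (univ.filter fun j => p < j ∧ w j < w' j).Nonempty := by
    by_contra hnone
    simp only [not_nonempty_iff_eq_empty, filter_eq_empty_iff, mem_univ, true_implies,
      not_and, not_lt] at hnone
    have hle : ∀ j ∈ univ, w' j ≤ w j := fun j _ => by
      rcases lt_trichotomy j p with hj | rfl | hj
      exacts [hbefore j hj, hp.le, hnone hj]
    exact (sum_lt_sum hle ⟨p, mem_univ p, hp⟩).not_ge hsum
  obtain ⟨q, hq, hmin⟩ := exists_min_image _ id hloss
  simp only [mem_filter, mem_univ, true_and, id] at hq hmin
  exact ⟨q, hq.1, hq.2, fun j hpj hjq => le_of_not_gt fun hj => (hmin j ⟨hpj, hj⟩).not_gt hjq⟩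

theorem card_filter_ne_lt_of_fix {ι β : Type*} [Fintype ι] [DecidableEq ι] [DecidableEq β]
    {v w w' : ι → β} {p q : ι} (hv : ∀ j, j ≠ p → j ≠ q → v j = w j)
    (hp : w p ≠ w' p) (hq : w q ≠ w' q) (hfix : v p = w' p ∨ v q = w' q) :
    (univ.filter fun j => v j ≠ w' j).card < (univ.filter fun j => w j ≠ w' j).card := by
  have hsub : (univ.filter fun j => v j ≠ w' j) ⊆ univ.filter fun j => w j ≠ w' j := by
    intro j
    simp only [mem_filter, mem_univ, true_and]
    by_cases hjp : j = p
    · exact fun _ => hjp ▸ hp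
    by_cases hjq : j = q
    · exact fun _ => hjq ▸ hq
    rw [hv j hjp hjq]
    exact id
  refine card_lt_card ((ssubset_iff_of_subset hsub).2 ?_)
  rcases hfix with hfix | hfix
  exacts [⟨p, by simpa using hp, by simpa using hfix⟩, ⟨q, by simpa using hq, by simpa using hfix⟩]

theorem Majorizes.exists_transfer {w w' : Fin n → ℝ} (h : Majorizes w w') (hw' : Antitone w')
    (hne : w ≠ w') :
    ∃ p q δ, 0 ≤ δ ∧ δ ≤ w p - w q ∧ Majorizes (transfer w p q δ) w' ∧
      (univ.filter fun j => transfer w p q δ j ≠ w' j).card <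
        (univ.filter fun j => w j ≠ w' j).card := by
  obtain ⟨p, hp, hbefore⟩ := h.exists_first_gain hne
  obtain ⟨q, hpq, hq, hbetween⟩ :=
    exists_first_loss_after h.sum_eq.le hp fun j hj => (hbefore j hj).ge
  have hqp : q ≠ p := hpq.ne'
  -- capped by both gaps, the transfer settles coordinate `p` or `q` and overshoots neither
  set δ := min (w p - w' p) (w' q - w q) with hδdef
  have hδp : δ ≤ w p - w' p := min_le_left _ _
  have hvp : transfer w p q δ p = w p - δ := by simp [transfer, hqp.symm]
  have hvq : transfer w p q δ q = w q + δ := by simp [transfer, hqp]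
  refine ⟨p, q, δ, le_min (by linarith) (by linarith), hδp.trans (by linarith [hw' hpq.le]),
    ⟨?_, fun k hk => ?_⟩, card_filter_ne_lt_of_fix (fun j hjp hjq => by simp [transfer, hjp, hjq])
      hp.ne' hq.ne ?_⟩
  · simp [transfer, sum_add_distrib, sum_sub_distrib, h.sum_eq]
  · rw [prefixSum_transfer]
    have hprefix := h.prefixSum_le k hk
    split_ifs with hqk hpk hpk
    · linarith
    · exact absurd ((Fin.lt_def.1 hpq).trans hqk) hpk
    · have hle : ∀ j : Fin n, (j : ℕ) < k → w' j ≤ w j := fun j hjk => by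
        rcases lt_trichotomy j p with hj | rfl | hj
        · exact (hbefore j hj).ge
        · exact hp.le
        · exact hbetween j hj (by rw [Fin.lt_def]; omega)
      linarith [sub_le_prefixSum_sub_prefixSum hle hpk]
    · linarith
  · rw [hvp, hvq]
    rcases min_cases (w p - w' p) (w' q - w q) with ⟨hδ, -⟩ | ⟨hδ, -⟩
    · exact .inl (by linarith)
    · exact .inr (by linarith)

theorem ConvexOn.le_of_majorizes {F : (Fin n → ℝ) → ℝ} (hF : ConvexOn ℝ Set.univ F)
    (hswap : ∀ w p q, F (w ∘ Equiv.swap p q) = F w)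
    {w w' : Fin n → ℝ} (hw' : Antitone w') (h : Majorizes w w') : F w' ≤ F w := by
  by_cases hne : w = w'
  · rw [hne]
  obtain ⟨p, q, δ, hδ, hδw, hmaj, hfewer⟩ := h.exists_transfer hw' hne
  exact (hF.le_of_majorizes hswap hw' hmaj).trans (hF.apply_transfer_le hswap hδ hδw)
termination_by (univ.filter fun j => w j ≠ w' j).card
decreasing_by exact hfewer

end Majorization

theorem convexOn_iSup_of_finite {ι E : Type*} [Finite ι] [AddCommMonoid E] [Module ℝ E]
    {s : Set E} (hs : Convex ℝ s) {f : ι → E → ℝ} (hf : ∀ i, ConvexOn ℝ s (f i)) :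
    ConvexOn ℝ s fun x => ⨆ i, f i x := by
  cases isEmpty_or_nonempty ι
  · simpa only [Real.iSup_of_isEmpty] using convexOn_const 0 hs
  have hbdd (x : E) : BddAbove (Set.range fun i => f i x) := (Set.finite_range _).bddAbove
  refine ⟨hs, fun x hx y hy a b ha hb hab => ciSup_le fun i => ?_⟩
  calc f i (a • x + b • y) ≤ a * f i x + b * f i y := (hf i).2 hx hy ha hb hab
    _ ≤ a * (⨆ j, f j x) + b * ⨆ j, f j y := by
      gcongr
      · exact le_ciSup (hbdd x) i
      · exact le_ciSup (hbdd y) i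

theorem convexOn_integral_of_finite {α E : Type*} [MeasurableSpace α] [Finite α]
    [MeasurableSingletonClass α] [AddCommMonoid E] [Module ℝ E] {s : Set E}
    (hs : Convex ℝ s) (μ : Measure α) [IsFiniteMeasure μ] {f : E → α → ℝ}
    (hf : ∀ ω, ConvexOn ℝ s (f · ω)) :
    ConvexOn ℝ s fun x => ∫ ω, f x ω ∂μ := by
  refine ⟨hs, fun x hx y hy a b ha hb hab => ?_⟩
  calc ∫ ω, f (a • x + b • y) ω ∂μ ≤ ∫ ω, a * f x ω + b * f y ω ∂μ :=
        integral_mono .of_finite .of_finite fun ω => (hf ω).2 hx hy ha hb hab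
    _ = a * ∫ ω, f x ω ∂μ + b * ∫ ω, f y ω ∂μ := by
        rw [integral_add .of_finite .of_finite, integral_const_mul, integral_const_mul]

theorem PMF.integral_uniformOfFintype_comp_equiv {α E : Type*} [Fintype α] [Nonempty α]
    [MeasurableSpace α] [MeasurableSingletonClass α] [NormedAddCommGroup E] [NormedSpace ℝ E]
    [CompleteSpace E] (e : α ≃ α) (f : α → E) :
    ∫ a, f (e a) ∂(PMF.uniformOfFintype α).toMeasure =
      ∫ a, f a ∂(PMF.uniformOfFintype α).toMeasure := by
  simp only [PMF.integral_eq_sum, PMF.uniformOfFintype_apply]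
  exact e.sum_comp fun a => _ • f a

theorem convexOn_topLoad (m n i : ℕ) (ω : Fin n → Fin m) :
    ConvexOn ℝ Set.univ fun w => topLoad m n i w ω :=
  convexOn_iSup_of_finite convex_univ fun T =>
    ⟨convex_univ, fun u _ v _ a b _ _ _ => le_of_eq <| by
      simp only [binLoad, Pi.add_apply, Pi.smul_apply, smul_eq_mul, sum_add_distrib, mul_sum]⟩

theorem topLoad_comp_perm (m n i : ℕ) (w : Fin n → ℝ) (σ : Equiv.Perm (Fin n))
    (ω : Fin n → Fin m) : topLoad m n i (w ∘ σ) ω = topLoad m n i w (ω ∘ σ.symm) := by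
  unfold topLoad binLoad
  congr! 3 with T b
  exact sum_equiv σ (by simp) fun _ _ => rfl

theorem integral_topLoad_comp_perm (m n i : ℕ) [NeZero m] (w : Fin n → ℝ)
    (σ : Equiv.Perm (Fin n)) :
    ∫ ω, topLoad m n i (w ∘ σ) ω ∂(PMF.uniformOfFintype (Fin n → Fin m)).toMeasure =
      ∫ ω, topLoad m n i w ω ∂(PMF.uniformOfFintype (Fin n → Fin m)).toMeasure := by
  simp_rw [topLoad_comp_perm]
  exact PMF.integral_uniformOfFintype_comp_equiv (σ.arrowCongr (Equiv.refl _)) (topLoad m n i w)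

theorem expected_topLoad_monotone_of_majorize_general (m n : ℕ) [NeZero m]
    (w w' : Fin n → ℝ) (hmono' : Antitone w')
    (hsum : ∑ j, w j = ∑ j, w' j)
    (hprefix : ∀ k : ℕ, k ≤ n →
      ∑ j ∈ Finset.univ.filter (fun j : Fin n => (j : ℕ) < k), w' j ≤
        ∑ j ∈ Finset.univ.filter (fun j : Fin n => (j : ℕ) < k), w j)
    (i : ℕ) :
    ∫ ω, topLoad m n i w' ω ∂(PMF.uniformOfFintype (Fin n → Fin m)).toMeasure ≤
      ∫ ω, topLoad m n i w ω ∂(PMF.uniformOfFintype (Fin n → Fin m)).toMeasure :=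
  (convexOn_integral_of_finite convex_univ _ (convexOn_topLoad m n i)).le_of_majorizes
    (fun u p q => integral_topLoad_comp_perm m n i u (Equiv.swap p q)) hmono' ⟨hsum, hprefix⟩

/-- Weighted balls-into-bins majorization (Berenbrink et al.): if the nonincreasing nonnegative
weight vector `w` majorizes `w'` (equal total weight and dominating prefix sums), then for every
`1 ≤ i ≤ m`, under independent uniform placement of the `n` balls into the `m` bins,
`E(S_i(w)) ≥ E(S_i(w'))`. -/
theorem expected_topLoad_monotone_of_majorize (m n : ℕ) [NeZero m]
    (w w' : Fin n → ℝ) (hw : ∀ j, 0 ≤ w j) (hw' : ∀ j, 0 ≤ w' j)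
    (hmono : Antitone w) (hmono' : Antitone w')
    (hsum : ∑ j, w j = ∑ j, w' j)
    (hprefix : ∀ k : ℕ, k ≤ n →
      ∑ j ∈ Finset.univ.filter (fun j : Fin n => (j : ℕ) < k), w' j ≤
        ∑ j ∈ Finset.univ.filter (fun j : Fin n => (j : ℕ) < k), w j)
    (i : ℕ) (hi : 1 ≤ i) (him : i ≤ m) :
    ∫ ω, topLoad m n i w' ω ∂(PMF.uniformOfFintype (Fin n → Fin m)).toMeasure ≤
      ∫ ω, topLoad m n i w ω ∂(PMF.uniformOfFintype (Fin n → Fin m)).toMeasure :=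
  expected_topLoad_monotone_of_majorize_general m n w w' hmono' hsum hprefix i
end
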